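/- Let f : ℝ³ → ℝ be continuously differentiable. Then the tangential vector field m(y) = y × ∇f(y) on S is silent from both inside and outside: for every x ∈ ℝ³ with |x| ≠ 1, ∫_S (y × ∇f(y)) · (x−y)/|x−y|³ dσ(y) = 0. -/

import Mathlib

/-!
Let `A y = x × y`, so that `R t = exp (t • A)` is the rotation about the axis `x`. Each `R t` is a
linear isometry fixing `x`, so it preserves the sphere, its Hausdorff measure and the weight
`|x - y|⁻³`; hence `t ↦ ∫_S f (R t y) |x - y|⁻³ dσ(y)` is constant. Differentiating under the
integral at `t = 0` gives `∫_S ∇f(y) · (x × y) |x - y|⁻³ dσ(y) = 0`, and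
`∇f(y) · (x × y) = (y × ∇f(y)) · (x - y)` is the cyclic symmetry of the triple product. The
integrals are finite because `σ(S) < ∞`, as `S` is a Lipschitz image of a square under spherical
coordinates.
-/

open MeasureTheory
open scoped RealInnerProductSpace

noncomputable section

abbrev E3 := EuclideanSpace ℝ (Fin 3)

/-- The unit sphere `S = {x ∈ ℝ³ : |x| = 1}`. -/
def sphS : Set E3 := Metric.sphere 0 1

/-- Cross product on `ℝ³`. -/
def cross3 (a b : E3) : E3 :=
  (EuclideanSpace.equiv (Fin 3) ℝ).symm
    ![a 1 * b 2 - a 2 * b 1, a 2 * b 0 - a 0 * b 2, a 0 * b 1 - a 1 * b 0]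

section ExpSmul

open NormedSpace

variable {E : Type*} [NormedAddCommGroup E] [NormedSpace ℝ E] [CompleteSpace E]

theorem hasDerivAt_exp_smul_apply (A : E →L[ℝ] E) (y : E) (t : ℝ) :
    HasDerivAt (fun s : ℝ => exp (s • A) y) (A (exp (t • A) y)) t := by
  simpa using (hasDerivAt_exp_smul_const' (𝕂 := ℝ) A t).clm_apply (hasDerivAt_const t y)

theorem exp_smul_apply_of_apply_eq_zero {A : E →L[ℝ] E} {v : E} (hv : A v = 0) (t : ℝ) :
    exp (t • A) v = v := by
  have hd (s : ℝ) : HasDerivAt (fun s : ℝ => exp (s • A) v) 0 s := by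
    simpa [hv] using (hasDerivAt_exp_smul_const (𝕂 := ℝ) A s).clm_apply (hasDerivAt_const s v)
  simpa using
    is_const_of_deriv_eq_zero (fun s => (hd s).differentiableAt) (fun s => (hd s).deriv) t 0

end ExpSmul

section SkewFlow

open NormedSpace

variable {E : Type*} [NormedAddCommGroup E] [InnerProductSpace ℝ E] [CompleteSpace E]
  {A : E →L[ℝ] E}

theorem norm_exp_smul_apply_of_skew (hA : ∀ u, ⟪A u, u⟫ = 0) (t : ℝ) (y : E) :
    ‖exp (t • A) y‖ = ‖y‖ := by
  have hd (s : ℝ) : HasDerivAt (fun s : ℝ => ‖exp (s • A) y‖ ^ 2) 0 s := by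
    have h := (hasDerivAt_exp_smul_apply A y s).norm_sq
    rwa [real_inner_comm, hA, mul_zero] at h
  simpa using
    is_const_of_deriv_eq_zero (fun s => (hd s).differentiableAt) (fun s => (hd s).deriv) t 0

theorem norm_sub_exp_smul_apply_of_skew (hA : ∀ u, ⟪A u, u⟫ = 0) {c : E} (hc : A c = 0)
    (t : ℝ) (y : E) : ‖c - exp (t • A) y‖ = ‖c - y‖ := by
  conv_lhs => rw [← exp_smul_apply_of_apply_eq_zero hc t, ← map_sub]
  exact norm_exp_smul_apply_of_skew hA t (c - y)

end SkewFlow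

section SphereIntegral

open NormedSpace Metric

variable {E : Type*} [NormedAddCommGroup E] [InnerProductSpace ℝ E] [FiniteDimensional ℝ E]
  [MeasurableSpace E] [BorelSpace E]

theorem LinearIsometry.setIntegral_sphere_comp {G : Type*} [NormedAddCommGroup G]
    [NormedSpace ℝ G] (L : E →ₗᵢ[ℝ] E) (d r : ℝ) (g : E → G) :
    ∫ y in sphere 0 r, g (L y) ∂μH[d] = ∫ y in sphere 0 r, g y ∂μH[d] := by
  let e : E ≃ᵢ E := (L.toLinearIsometryEquiv rfl).toIsometryEquiv
  have hpre : e ⁻¹' sphere 0 r = sphere 0 r := by ext y; simp [e]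
  have h := (e.measurePreserving_hausdorffMeasure d).setIntegral_preimage_emb
    e.toHomeomorph.measurableEmbedding g (sphere 0 r)
  rwa [hpre] at h

variable {A : E →L[ℝ] E} {f g : E → ℝ}

theorem hasDerivAt_integral_comp_exp_smul (hA : ∀ u, ⟪A u, u⟫ = 0) {μ : Measure E} {r : ℝ}
    (hμ : ∀ᵐ y ∂μ, ‖y‖ ≤ r) (hf : ContDiff ℝ 1 f) (hg : Integrable g μ) :
    HasDerivAt (fun t : ℝ => ∫ y, f (exp (t • A) y) * g y ∂μ)
      (∫ y, fderiv ℝ f y (A y) * g y ∂μ) 0 := by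
  have hf' : Continuous (fderiv ℝ f) := hf.continuous_fderiv one_ne_zero
  obtain ⟨C, hC⟩ := (isCompact_closedBall (0 : E) r).exists_bound_of_continuousOn
    hf.continuous.continuousOn
  obtain ⟨C', hC'⟩ := (isCompact_closedBall (0 : E) r).exists_bound_of_continuousOn
    hf'.continuousOn
  have hR (t : ℝ) (y : E) (hy : ‖y‖ ≤ r) : exp (t • A) y ∈ closedBall 0 r := by
    simpa [norm_exp_smul_apply_of_skew hA] using hy
  have hR0 : Continuous fun y => exp ((0 : ℝ) • A) y := (exp ((0 : ℝ) • A)).continuous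
  have h := hasDerivAt_integral_of_dominated_loc_of_deriv_le (x₀ := (0 : ℝ))
    (F' := fun t y => fderiv ℝ f (exp (t • A) y) (A (exp (t • A) y)) * g y)
    (bound := fun y => C' * (‖A‖ * r) * ‖g y‖) (ball_mem_nhds 0 one_pos)
    (.of_forall fun t =>
      (hf.continuous.comp (exp (t • A)).continuous).aestronglyMeasurable.mul hg.1)
    (hg.bdd_mul (hf.continuous.comp hR0).aestronglyMeasurable
      (by filter_upwards [hμ] with y hy using hC _ (hR 0 y hy)))
    (((hf'.comp hR0).clm_apply (A.continuous.comp hR0)).aestronglyMeasurable.mul hg.1)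
    ?_ (hg.norm.const_mul _) ?_
  · simpa using h.2
  · filter_upwards [hμ] with y hy t _
    have hz := hR t y hy
    rw [norm_mul]
    gcongr
    calc ‖fderiv ℝ f (exp (t • A) y) (A (exp (t • A) y))‖
        ≤ ‖fderiv ℝ f (exp (t • A) y)‖ * ‖A (exp (t • A) y)‖ :=
          ContinuousLinearMap.le_opNorm _ _
      _ ≤ C' * (‖A‖ * r) :=
          mul_le_mul (hC' _ hz) (A.le_opNorm_of_le (mem_closedBall_zero_iff.1 hz))
            (norm_nonneg _) ((norm_nonneg _).trans (hC' _ hz))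
  · refine .of_forall fun y t _ => ?_
    exact ((hf.differentiable one_ne_zero _).hasFDerivAt.comp_hasDerivAt t
      (hasDerivAt_exp_smul_apply A y t)).mul_const (g y)

theorem integral_sphere_fderiv_apply_mul_eq_zero_of_skew (hA : ∀ u, ⟪A u, u⟫ = 0) {d r : ℝ}
    (hf : ContDiff ℝ 1 f) (hg : IntegrableOn g (sphere 0 r) μH[d])
    (hg_inv : ∀ (t : ℝ) (y : E), g (exp (t • A) y) = g y) :
    ∫ y in sphere (0 : E) r, fderiv ℝ f y (A y) * g y ∂μH[d] = 0 := by
  have hconst : (fun t : ℝ => ∫ y in sphere 0 r, f (exp (t • A) y) * g y ∂μH[d])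
      = fun _ => ∫ y in sphere 0 r, f y * g y ∂μH[d] := by
    funext t
    let L : E →ₗᵢ[ℝ] E := ⟨(exp (t • A) : E →L[ℝ] E), norm_exp_smul_apply_of_skew hA t⟩
    simpa [L, hg_inv] using L.setIntegral_sphere_comp d r (fun z => f z * g z)
  have hderiv := hasDerivAt_integral_comp_exp_smul hA
    (ae_restrict_of_forall_mem isClosed_sphere.measurableSet fun y hy =>
      (mem_sphere_zero_iff_norm.1 hy).le) hf hg
  rw [hconst] at hderiv
  exact hderiv.unique (hasDerivAt_const _ _)

end SphereIntegral

section SphereCoordinates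

open Metric ENNReal

def sphCoord (p : Fin 2 → ℝ) : E3 :=
  (EuclideanSpace.equiv (Fin 3) ℝ).symm
    ![Real.cos (p 0), Real.sin (p 0) * Real.cos (p 1), Real.sin (p 0) * Real.sin (p 1)]

theorem contDiff_sphCoord : ContDiff ℝ 1 sphCoord := by
  refine (EuclideanSpace.equiv (Fin 3) ℝ).symm.contDiff.comp (contDiff_pi.2 fun i => ?_)
  fin_cases i <;> simp <;> fun_prop

theorem sphS_subset_image_sphCoord : sphS ⊆ sphCoord '' closedBall 0 4 := by
  intro y hy
  have hsum : y 0 ^ 2 + y 1 ^ 2 + y 2 ^ 2 = 1 := by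
    have h := mem_sphere_zero_iff_norm.1 hy
    rw [EuclideanSpace.norm_eq, Real.sqrt_eq_one, Fin.sum_univ_three] at h
    simpa using h
  have hy0 : |y 0| ≤ 1 := (sq_le_one_iff_abs_le_one _).1 (by nlinarith)
  set z : ℂ := ⟨y 1, y 2⟩
  have hz : ‖z‖ = Real.sin (Real.arccos (y 0)) := by
    rw [Real.sin_arccos, Complex.norm_def, Complex.normSq_apply]
    congr 1
    simp [z]
    linarith
  refine ⟨![Real.arccos (y 0), Complex.arg z], ?_, ?_⟩
  · rw [mem_closedBall_zero_iff, pi_norm_le_iff_of_nonneg (by norm_num)]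
    have := Real.pi_le_four
    intro i
    fin_cases i
    · simpa using abs_le.2
        ⟨by linarith [Real.arccos_nonneg (y 0)], by linarith [Real.arccos_le_pi (y 0)]⟩
    · simpa using abs_le.2
        ⟨by linarith [Complex.neg_pi_lt_arg z], by linarith [Complex.arg_le_pi z]⟩
  · ext i
    fin_cases i
    · simp [sphCoord, Real.cos_arccos (abs_le.1 hy0).1 (abs_le.1 hy0).2]
    · simp [sphCoord, ← hz, Complex.norm_mul_cos_arg, z]
    · simp [sphCoord, ← hz, Complex.norm_mul_sin_arg, z]

theorem hausdorffMeasure_sphS_lt_top : μH[2] sphS < ∞ := by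
  obtain ⟨K, hK⟩ := contDiff_sphCoord.locallyLipschitz.locallyLipschitzOn
    |>.exists_lipschitzOnWith_of_compact (isCompact_closedBall (0 : Fin 2 → ℝ) 4)
  have hball : μH[2] (closedBall (0 : Fin 2 → ℝ) 4) < ∞ := by
    rw [show (2 : ℝ) = Fintype.card (Fin 2) by simp, hausdorffMeasure_pi_real]
    exact measure_closedBall_lt_top
  calc μH[2] sphS ≤ μH[2] (sphCoord '' closedBall 0 4) := measure_mono sphS_subset_image_sphCoord
    _ ≤ (K : ℝ≥0∞) ^ (2 : ℝ) * μH[2] (closedBall (0 : Fin 2 → ℝ) 4) :=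
      hK.hausdorffMeasure_image_le zero_le_two
    _ < ∞ := mul_lt_top (rpow_lt_top_of_nonneg zero_le_two coe_ne_top) hball

end SphereCoordinates

def cross3CLM (x : E3) : E3 →L[ℝ] E3 :=
  LinearMap.toContinuousLinearMap
    { toFun := cross3 x
      map_add' := fun a b => by ext i; fin_cases i <;> simp [cross3] <;> ring
      map_smul' := fun c a => by ext i; fin_cases i <;> simp [cross3] <;> ring }

theorem cross3_self (x : E3) : cross3 x x = 0 := by
  ext i; fin_cases i <;> simp [cross3] <;> ring

theorem inner_cross3_self_right (x u : E3) : ⟪cross3 x u, u⟫ = 0 := by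
  simp [cross3, PiLp.inner_apply, Fin.sum_univ_three]
  ring

theorem inner_cross3_sub (x y v : E3) : ⟪cross3 y v, x - y⟫ = ⟪v, cross3 x y⟫ := by
  simp [cross3, PiLp.inner_apply, Fin.sum_univ_three]
  ring

/-- **Toroidal fields are silent.** For any `C¹` function `f : ℝ³ → ℝ`, the tangential
field `y ↦ y × ∇f(y)` on the unit sphere produces a vanishing magnetic potential at
every point off the sphere. -/
theorem toroidal_field_silent (f : E3 → ℝ) (hf : ContDiff ℝ 1 f) :
    ∀ x : E3, ‖x‖ ≠ 1 →
      (∫ y in sphS,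
        ⟪cross3 y (gradient f y), (‖x - y‖ ^ 3)⁻¹ • (x - y)⟫ ∂μH[2]) = 0 := by
  intro x hx
  have hw : IntegrableOn (fun y => (‖x - y‖ ^ 3)⁻¹) sphS μH[2] := by
    refine ContinuousOn.integrableOn_of_subset_isCompact ?_ (isCompact_sphere 0 1)
      Metric.isClosed_sphere.measurableSet subset_rfl hausdorffMeasure_sphS_lt_top.ne
    refine ContinuousOn.inv₀ (by fun_prop) fun y hy => pow_ne_zero _ ?_
    rw [norm_ne_zero_iff, sub_ne_zero]
    rintro rfl
    exact hx (mem_sphere_zero_iff_norm.1 hy)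
  have hzero := integral_sphere_fderiv_apply_mul_eq_zero_of_skew (A := cross3CLM x) (d := 2)
    (inner_cross3_self_right x) hf hw fun t y => by
      rw [norm_sub_exp_smul_apply_of_skew (inner_cross3_self_right x) (cross3_self x)]
  rw [← hzero]
  congr 1
  funext y
  rw [real_inner_smul_right, inner_cross3_sub, gradient, InnerProductSpace.toDual_symm_apply,
    mul_comm]
  rfl
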